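/- For every finite set P of at least 5 points in general position in the plane, there exist two non-crossing spanning trees T, S of P with |E(T) △ E(S)| = 2, say T \ S = {e₁}, S \ T = {e₂}, such that the segments e₁ and e₂ cross (i.e., T and S form a degenerate U-clique in the geometric tree graph). -/

import Mathlib

/-!
Let `o` be the lexicographically least point of `P`. All other points lie in a half-plane seen
from `o`, so they are totally ordered by angle around `o`; let `q₁, q₂, q₃, q₄` be the first four.
Two of the segments spanned by `o, q₁, …, q₄` cross properly, say `[p, q]` and `[u, w]`, with `u`
left and `w` right of the line `pq`. Join every point left of `pq` (and `p`) to `u` and every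
point right of it (and `q`) to `w`: two stars in opposite closed half-planes. Adding the edge
`pq`, resp. `uw`, gives two non-crossing spanning trees that differ exactly in these two edges.
-/

def Cross (a b c d : ℝ × ℝ) : Prop :=
  (openSegment ℝ a b ∩ openSegment ℝ c d).Nonempty

def GenPos (P : Finset (ℝ × ℝ)) : Prop :=
  ∀ a ∈ P, ∀ b ∈ P, ∀ c ∈ P, a ≠ b → a ≠ c → b ≠ c →
    ¬ Collinear ℝ ({a, b, c} : Set (ℝ × ℝ))

def NonCrossing {P : Finset (ℝ × ℝ)} (T : SimpleGraph P) : Prop :=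
  ∀ a b c d : P, T.Adj a b → T.Adj c d → s(a, b) ≠ s(c, d) →
    ¬ Cross (a : ℝ × ℝ) b c d

open Finset Set

def orient (a b c : ℝ × ℝ) : ℝ := (b.1 - a.1) * (c.2 - a.2) - (b.2 - a.2) * (c.1 - a.1)

section Orient

variable {a b c x y z : ℝ × ℝ}

lemma orient_rotate (a b c : ℝ × ℝ) : orient b c a = orient a b c := by
  unfold orient; ring

lemma orient_swap (a b c : ℝ × ℝ) : orient a c b = -orient a b c := by
  unfold orient; ring

lemma orient_swap_left (a b c : ℝ × ℝ) : orient b a c = -orient a b c := by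
  unfold orient; ring

lemma orient_eq_sub_add (o a b c : ℝ × ℝ) :
    orient a b c = orient o b c - orient o a c + orient o a b := by
  unfold orient; ring

lemma orient_left_self (a b : ℝ × ℝ) : orient a b a = 0 := by
  unfold orient; ring

lemma orient_right_self (a b : ℝ × ℝ) : orient a b b = 0 := by
  unfold orient; ring

lemma orient_smul_add_smul (a b x y : ℝ × ℝ) {s t : ℝ} (hst : s + t = 1) :
    orient a b (s • x + t • y) = s * orient a b x + t * orient a b y := by
  obtain rfl : s = 1 - t := by linarith
  simp only [orient, Prod.fst_add, Prod.snd_add, Prod.smul_fst, Prod.smul_snd, smul_eq_mul]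
  ring

lemma exists_orient_eq_of_mem_openSegment (a b : ℝ × ℝ) (hz : z ∈ openSegment ℝ x y) :
    ∃ s t : ℝ, 0 < s ∧ 0 < t ∧ orient a b z = s * orient a b x + t * orient a b y := by
  obtain ⟨s, t, hs, ht, hst, rfl⟩ := hz
  exact ⟨s, t, hs, ht, orient_smul_add_smul a b x y hst⟩

lemma orient_pos_of_mem_openSegment (hx : 0 ≤ orient a b x) (hy : 0 < orient a b y)
    (hz : z ∈ openSegment ℝ x y) : 0 < orient a b z := by
  obtain ⟨s, t, hs, ht, h⟩ := exists_orient_eq_of_mem_openSegment a b hz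
  rw [h]; positivity

lemma orient_eq_zero_of_mem_openSegment (hz : z ∈ openSegment ℝ a b) : orient a b z = 0 := by
  obtain ⟨s, t, -, -, h⟩ := exists_orient_eq_of_mem_openSegment a b hz
  rw [h, orient_left_self, orient_right_self]; ring

lemma collinear_of_orient_eq_zero (h : orient a b c = 0) :
    Collinear ℝ ({a, b, c} : Set (ℝ × ℝ)) := by
  rcases eq_or_ne a b with rfl | hab
  · rw [insert_eq_of_mem (mem_insert _ _)]
    exact collinear_pair ℝ a c
  have hc : c ∈ line[ℝ, a, b] := by
    by_cases h1 : a.1 = b.1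
    · have h2 : a.2 ≠ b.2 := fun h2 => hab (Prod.ext h1 h2)
      have h2' : b.2 - a.2 ≠ 0 := sub_ne_zero.mpr h2.symm
      convert AffineMap.lineMap_mem_affineSpan_pair ((c.2 - a.2) / (b.2 - a.2)) a b using 1
      rw [AffineMap.lineMap_apply_module]
      unfold orient at h
      ext <;> simp only [Prod.fst_add, Prod.snd_add, Prod.smul_fst, Prod.smul_snd, smul_eq_mul] <;>
        field_simp
      · rw [h1] at h ⊢; nlinarith [h]
      · ring
    · have h1' : b.1 - a.1 ≠ 0 := sub_ne_zero.mpr (Ne.symm h1)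
      convert AffineMap.lineMap_mem_affineSpan_pair ((c.1 - a.1) / (b.1 - a.1)) a b using 1
      rw [AffineMap.lineMap_apply_module]
      unfold orient at h
      ext <;> simp only [Prod.fst_add, Prod.snd_add, Prod.smul_fst, Prod.smul_snd, smul_eq_mul] <;>
        field_simp
      · ring
      · linear_combination h
  have := collinear_insert_of_mem_affineSpan_pair hc
  rwa [insert_comm, pair_comm] at this

lemma ne_of_orient_ne_zero (h : orient a b c ≠ 0) : a ≠ b ∧ a ≠ c ∧ b ≠ c := by
  refine ⟨?_, ?_, ?_⟩ <;> rintro rfl <;> apply h <;> unfold orient <;> ring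

lemma GenPos.orient_ne_zero {P : Finset (ℝ × ℝ)} (hP : GenPos P) (ha : a ∈ P) (hb : b ∈ P)
    (hc : c ∈ P) (hab : a ≠ b) (hac : a ≠ c) (hbc : b ≠ c) : orient a b c ≠ 0 :=
  fun h => hP a ha b hb c hc hab hac hbc (collinear_of_orient_eq_zero h)

lemma GenPos.orient_coe_ne_zero {P : Finset (ℝ × ℝ)} (hP : GenPos P) {x y z : P} (hxy : x ≠ y) (hxz : x ≠ z)
    (hyz : y ≠ z) : orient x y z ≠ 0 :=
  hP.orient_ne_zero x.2 y.2 z.2 (Subtype.coe_injective.ne hxy) (Subtype.coe_injective.ne hxz)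
    (Subtype.coe_injective.ne hyz)

end Orient

section Crossing

variable {a b c d p q u w : ℝ × ℝ}

lemma Cross.symm (h : Cross a b c d) : Cross c d a b := by
  rwa [Cross, inter_comm]

lemma Cross.swap_left (h : Cross a b c d) : Cross b a c d := by
  rwa [Cross, openSegment_symm]

lemma Cross.swap_right (h : Cross a b c d) : Cross a b d c :=
  h.symm.swap_left.symm

lemma Cross.of_sym2_eq {a' b' c' d' : ℝ × ℝ} (h : Cross a b c d) (hab : s(a, b) = s(a', b'))
    (hcd : s(c, d) = s(c', d')) : Cross a' b' c' d' := by
  have h' : Cross a' b' c d := by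
    rcases Sym2.eq_iff.mp hab with ⟨rfl, rfl⟩ | ⟨rfl, rfl⟩
    exacts [h, h.swap_left]
  rcases Sym2.eq_iff.mp hcd with ⟨rfl, rfl⟩ | ⟨rfl, rfl⟩
  exacts [h', h'.swap_right]

lemma not_cross_of_orient_ne_zero (h : orient a b c ≠ 0) : ¬ Cross a b a c := by
  rintro ⟨z, hzb, hzc⟩
  obtain ⟨s, t, -, ht, hz⟩ := exists_orient_eq_of_mem_openSegment a b hzc
  rw [orient_eq_zero_of_mem_openSegment hzb, orient_left_self] at hz
  exact h (by nlinarith)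

lemma not_cross_of_separated (hab : ∀ z ∈ openSegment ℝ a b, 0 < orient p q z)
    (hcd : ∀ z ∈ openSegment ℝ c d, orient p q z ≤ 0) : ¬ Cross a b c d := by
  rintro ⟨z, hzab, hzcd⟩
  exact (hab z hzab).not_ge (hcd z hzcd)

lemma not_cross_of_opposite_sides {x y : ℝ × ℝ} (hx : 0 ≤ orient p q x)
    (hu : 0 < orient p q u) (hy : orient p q y ≤ 0) (hw : orient p q w < 0) :
    ¬ Cross x u y w := by
  refine not_cross_of_separated (p := p) (q := q)
    (fun _ hz => orient_pos_of_mem_openSegment hx hu hz) (fun z hz => ?_)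
  have := orient_pos_of_mem_openSegment (a := q) (b := p) (by linarith [orient_swap_left p q y])
    (by linarith [orient_swap_left p q w]) hz
  linarith [orient_swap_left p q z]

lemma not_cross_of_orient_pos {x : ℝ × ℝ} (hx : 0 < orient p q x) (hu : 0 < orient p q u) :
    ¬ Cross p q x u :=
  not_cross_of_separated (p := p) (q := q) (fun _ hz => orient_pos_of_mem_openSegment hx.le hu hz)
    (fun _ hz => (orient_eq_zero_of_mem_openSegment hz).le) |>.comp Cross.symm

def ProperCross (p q u w : ℝ × ℝ) : Prop :=
  0 < orient p q u ∧ orient p q w < 0 ∧ orient u w p < 0 ∧ 0 < orient u w q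

lemma ProperCross.cross (h : ProperCross p q u w) : Cross p q u w := by
  obtain ⟨hu, hw, hp, hq⟩ := h
  -- On `[p, q]` the weight of `p` is proportional to the distance of `q` from the line `uw`,
  -- and symmetrically on `[u, w]`.
  have hA : orient p q u - orient p q w ≠ 0 := by linarith
  have hC : orient u w q - orient u w p ≠ 0 := by linarith
  refine ⟨(orient u w q / (orient u w q - orient u w p)) • p +
      (-orient u w p / (orient u w q - orient u w p)) • q,
    ⟨_, _, div_pos hq (by linarith), div_pos (by linarith) (by linarith),
      by field_simp; ring, rfl⟩,
    ⟨-orient p q w / (orient p q u - orient p q w), orient p q u / (orient p q u - orient p q w),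
      div_pos (by linarith) (by linarith), div_pos hu (by linarith), by field_simp; ring, ?_⟩⟩
  ext <;> simp only [Prod.fst_add, Prod.snd_add, Prod.smul_fst, Prod.smul_snd, smul_eq_mul] <;>
    field_simp <;> unfold orient <;> ring

lemma ProperCross.ne (h : ProperCross p q u w) :
    p ≠ q ∧ p ≠ u ∧ p ≠ w ∧ q ≠ u ∧ q ≠ w ∧ u ≠ w :=
  have h₁ := ne_of_orient_ne_zero h.1.ne'
  have h₂ := ne_of_orient_ne_zero h.2.1.ne
  ⟨h₁.1, h₁.2.1, h₂.2.1, h₁.2.2, h₂.2.2, (ne_of_orient_ne_zero h.2.2.1.ne).1⟩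

end Crossing

section StrictTotalOrder

variable {α : Type*} {r : α → α → Prop} [DecidableRel r] {s : Finset α}

lemma card_filter_rel_lt_of_rel (hirr : ∀ a ∈ s, ¬ r a a)
    (htrans : ∀ a ∈ s, ∀ b ∈ s, ∀ c ∈ s, r a b → r b c → r a c) {a b : α} (ha : a ∈ s)
    (hb : b ∈ s) (hab : r a b) : #(s.filter (r · a)) < #(s.filter (r · b)) := by
  refine card_lt_card ⟨fun x hx => ?_, fun hsub => hirr a ha ?_⟩
  · simp only [mem_filter] at hx ⊢
    exact ⟨hx.1, htrans x hx.1 a ha b hb hx.2 hab⟩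
  · exact (mem_filter.mp (hsub (mem_filter.mpr ⟨ha, hab⟩))).2

lemma Finset.exists_fin_chain (hirr : ∀ a ∈ s, ¬ r a a)
    (htrans : ∀ a ∈ s, ∀ b ∈ s, ∀ c ∈ s, r a b → r b c → r a c)
    (htotal : ∀ a ∈ s, ∀ b ∈ s, a ≠ b → r a b ∨ r b a) {n : ℕ} (hn : n ≤ #s) :
    ∃ f : Fin n → α, (∀ i, f i ∈ s) ∧ ∀ i j, i < j → r (f i) (f j) := by
  set rank : α → ℕ := fun a => #(s.filter (r · a))
  have hrank : ∀ {a b}, a ∈ s → b ∈ s → r a b → rank a < rank b :=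
    card_filter_rel_lt_of_rel hirr htrans
  have rel_of_rank_lt : ∀ a ∈ s, ∀ b ∈ s, rank a < rank b → r a b := fun a ha b hb h =>
    (htotal a ha b hb (by rintro rfl; exact h.false)).resolve_right
      fun hba => (hrank hb ha hba).asymm h
  have hsurj : Set.SurjOn rank s (range #s) := by
    refine surjOn_of_injOn_of_card_le rank (fun a ha => ?_) (fun a ha b hb h => ?_)
      (card_range _).le
    · exact mem_range.mpr (card_lt_card
        ⟨filter_subset _ _, fun h => hirr a ha (mem_filter.mp (h ha)).2⟩)
    · by_contra hne
      rcases htotal a ha b hb hne with h' | h'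
      exacts [(hrank ha hb h').ne h, (hrank hb ha h').ne h.symm]
  choose f hfs hf using hsurj
  have hi : ∀ i : Fin n, (i : ℕ) ∈ range #s := fun i => mem_range.mpr (by omega)
  refine ⟨fun i => f (hi i), fun i => hfs _, fun i j hij => ?_⟩
  exact rel_of_rank_lt _ (hfs _) _ (hfs _) (by rw [hf, hf]; exact hij)

end StrictTotalOrder

section Fan

variable {o p q s : ℝ × ℝ}

lemma orient_mul_orient (o a b c d : ℝ × ℝ) :
    orient o a c * orient o b d = orient o a b * orient o c d + orient o a d * orient o b c := by
  unfold orient; ring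

lemma orient_pos_trans (hp : toLex o < toLex p) (hq : toLex o < toLex q) (hs : toLex o < toLex s)
    (hpq : 0 < orient o p q) (hqs : 0 < orient o q s) (hps : orient o p s ≠ 0) :
    0 < orient o p s := by
  rw [Prod.Lex.toLex_lt_toLex] at hp hq hs
  have hp1 : 0 ≤ p.1 - o.1 := by rcases hp with h | ⟨h, -⟩ <;> linarith
  have hs1 : 0 ≤ s.1 - o.1 := by rcases hs with h | ⟨h, -⟩ <;> linarith
  rcases hq with hq1 | ⟨hq1, hq2⟩
  · have key : (q.1 - o.1) * orient o p s =
        (p.1 - o.1) * orient o q s + (s.1 - o.1) * orient o p q := by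
      unfold orient; ring
    have : 0 ≤ (q.1 - o.1) * orient o p s := by rw [key]; positivity
    exact lt_of_le_of_ne (nonneg_of_mul_nonneg_right this (by linarith)) hps.symm
  · unfold orient at hqs
    rw [← hq1, sub_self, zero_mul, zero_sub] at hqs
    nlinarith

lemma properCross_of_fan {o a b c d : ℝ × ℝ} (hab : 0 < orient o a b) (hac : 0 < orient o a c)
    (hbc : 0 < orient o b c) (hbd : 0 < orient o b d)
    (hcd : 0 < orient o c d) (habc : orient a b c ≠ 0) (hbcd : orient b c d ≠ 0) :
    ProperCross o b c a ∨ ProperCross o c d b ∨ ProperCross a c b d := by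
  -- Unless `b` lies beyond `ac` or `c` beyond `bd` (seen from `o`), the Plücker relation
  -- forces `[a, c]` and `[b, d]` to cross.
  have hplu := orient_mul_orient o a b c d
  have eabc := orient_eq_sub_add o a b c
  have ebcd := orient_eq_sub_add o b c d
  have eacd := orient_eq_sub_add o a c d
  have eabd := orient_eq_sub_add o a b d
  rcases habc.lt_or_gt with habc | habc
  · rcases hbcd.lt_or_gt with hbcd | hbcd
    · refine Or.inr (Or.inr ⟨?_, ?_, ?_, ?_⟩)
      · linarith [orient_swap a b c]
      · nlinarith
      · nlinarith [orient_rotate a b d]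
      · linarith [orient_swap b c d, orient_rotate b c d, orient_rotate c d b]
    · refine Or.inr (Or.inl ⟨hcd, ?_, ?_, ?_⟩)
      · linarith [orient_swap o b c]
      · linarith [orient_rotate o d b, orient_swap o b d]
      · linarith [orient_rotate b c d, orient_rotate c d b]
  · refine Or.inl ⟨hbc, ?_, ?_, ?_⟩
    · linarith [orient_swap o a b]
    · linarith [orient_rotate o c a, orient_swap o a c]
    · linarith [orient_rotate a b c, orient_rotate b c a]

lemma exists_properCross {P : Finset (ℝ × ℝ)} (hP : GenPos P) (hcard : 5 ≤ #P) :
    ∃ p ∈ P, ∃ q ∈ P, ∃ u ∈ P, ∃ w ∈ P, ProperCross p q u w := by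
  obtain ⟨o, ho, hmin⟩ := P.exists_min_image toLex (card_pos.mp (by omega))
  have hlt : ∀ x ∈ P.erase o, toLex o < toLex x := fun x hx =>
    (hmin x (mem_of_mem_erase hx)).lt_of_ne fun h => ne_of_mem_erase hx (toLex.injective h).symm
  have hne : ∀ x ∈ P.erase o, ∀ y ∈ P.erase o, x ≠ y → orient o x y ≠ 0 := fun x hx y hy hxy =>
    hP.orient_ne_zero ho (mem_of_mem_erase hx) (mem_of_mem_erase hy)
      (ne_of_mem_erase hx).symm (ne_of_mem_erase hy).symm hxy
  obtain ⟨f, hfs, hf⟩ := (P.erase o).exists_fin_chain (r := fun x y => 0 < orient o x y) (n := 4)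
    (fun x _ => by simp [orient_right_self])
    (fun x hx y hy z hz hxy hyz => orient_pos_trans (hlt x hx) (hlt y hy) (hlt z hz) hxy hyz
      (hne x hx z hz (by rintro rfl; linarith [orient_swap o x y])))
    (fun x hx y hy hxy =>
      (hne x hx y hy hxy).gt_or_lt.imp id fun h => by linarith [orient_swap o x y])
    (by rw [card_erase_of_mem ho]; omega)
  have hfP : ∀ i, f i ∈ P := fun i => mem_of_mem_erase (hfs i)
  have hfne : ∀ i j, i < j → f i ≠ f j := fun i j hij h => by
    simpa [h, orient_right_self] using hf i j hij
  rcases properCross_of_fan (hf 0 1 (by decide)) (hf 0 2 (by decide)) (hf 1 2 (by decide))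
    (hf 1 3 (by decide)) (hf 2 3 (by decide))
    (hP.orient_ne_zero (hfP 0) (hfP 1) (hfP 2) (hfne 0 1 (by decide)) (hfne 0 2 (by decide))
      (hfne 1 2 (by decide)))
    (hP.orient_ne_zero (hfP 1) (hfP 2) (hfP 3) (hfne 1 2 (by decide)) (hfne 1 3 (by decide))
      (hfne 2 3 (by decide))) with h | h | h
  exacts [⟨o, ho, _, hfP 1, _, hfP 2, _, hfP 0, h⟩, ⟨o, ho, _, hfP 2, _, hfP 3, _, hfP 1, h⟩,
    ⟨_, hfP 0, _, hfP 2, _, hfP 1, _, hfP 3, h⟩]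

end Fan

namespace SimpleGraph

variable {V : Type*} {h : V → V}

-- For idempotent `h`, a disjoint union of stars centred at the fixed points of `h`.
def hubGraph (h : V → V) : SimpleGraph V := fromRel fun x y => y = h x

lemma hubGraph_adj {x y : V} : (hubGraph h).Adj x y ↔ x ≠ y ∧ (y = h x ∨ x = h y) :=
  fromRel_adj _ _ _

lemma hubGraph_reachable_hub (x : V) : (hubGraph h).Reachable x (h x) := by
  by_cases hx : x = h x
  · rw [← hx]
  · exact Adj.reachable (hubGraph_adj.mpr ⟨hx, Or.inl rfl⟩)

section Idempotent

variable (hh : ∀ x, h (h x) = h x)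
include hh

lemma hub_eq_of_reachable {x y : V} (hxy : (hubGraph h).Reachable x y) : h x = h y := by
  obtain ⟨p⟩ := hxy
  induction p with
  | nil => rfl
  | cons hadj _ ih =>
    refine Eq.trans ?_ ih
    rcases (hubGraph_adj.mp hadj).2 with rfl | rfl
    exacts [(hh _).symm, hh _]

lemma eq_hub_of_adj {x y : V} (hx : x ≠ h x) (hxy : (hubGraph h).Adj x y) : y = h x :=
  (hubGraph_adj.mp hxy).2.resolve_right fun hyx => hx (by rw [hyx, hh])

lemma isBridge_hubGraph {x : V} (hx : x ≠ h x) : (hubGraph h).IsBridge s(x, h x) := by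
  rw [isBridge_iff_forall_walk_mem_edges]
  intro p
  have hp : ¬ p.Nil := Walk.not_nil_of_ne hx
  simpa [← eq_hub_of_adj hh hx (p.adj_snd hp)] using p.mk_start_snd_mem_edges hp

lemma isAcyclic_hubGraph : (hubGraph h).IsAcyclic := by
  rw [isAcyclic_iff_forall_adj_isBridge]
  rintro x y hxy
  rcases hubGraph_adj.mp hxy with ⟨hne, rfl | rfl⟩
  · exact isBridge_hubGraph hh hne
  · rw [Sym2.eq_swap]; exact isBridge_hubGraph hh hne.symm

theorem isTree_hubGraph_sup_edge {y z : V} (hyz : h y ≠ h z)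
    (hcover : ∀ x, h x = h y ∨ h x = h z) : (hubGraph h ⊔ edge y z).IsTree := by
  refine ⟨(connected_iff_exists_forall_reachable _).mpr ⟨y, fun x => ?_⟩,
    (isAcyclic_hubGraph hh).sup_edge_of_not_reachable fun hr => hyz (hub_eq_of_reachable hh hr)⟩
  have hG : ∀ {a b}, (hubGraph h).Reachable a b → (hubGraph h ⊔ edge y z).Reachable a b :=
    Reachable.mono le_sup_left
  have hx : (hubGraph h ⊔ edge y z).Reachable (h x) x := hG (hubGraph_reachable_hub x).symm
  rcases hcover x with hxy | hxz
  · exact (hG (hubGraph_reachable_hub y)).trans (hxy ▸ hx)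
  · have hyz' : (hubGraph h ⊔ edge y z).Reachable y z :=
      Adj.reachable (Or.inr ((edge_adj y z y z).mpr ⟨Or.inl ⟨rfl, rfl⟩, fun h' => hyz (h' ▸ rfl)⟩))
    exact hyz'.trans ((hG (hubGraph_reachable_hub z)).trans (hxz ▸ hx))

end Idempotent

lemma edgeSet_sup_edge_diff_sup_edge {G : SimpleGraph V} {a b c d : V} (hab : a ≠ b)
    (hcd : c ≠ d) (hG : s(a, b) ∉ G.edgeSet) (hne : s(a, b) ≠ s(c, d)) :
    (G ⊔ edge a b).edgeSet \ (G ⊔ edge c d).edgeSet = {s(a, b)} := by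
  rw [edgeSet_sup, edgeSet_sup, edgeSet_edge_of_ne hab, edgeSet_edge_of_ne hcd]
  ext e
  simp only [Set.mem_sdiff, Set.mem_union, Set.mem_singleton_iff]
  constructor
  · rintro ⟨he | he, hn⟩
    · exact absurd (Or.inl he) hn
    · exact he
  · rintro rfl
    exact ⟨Or.inr rfl, by rintro (h' | h'); exacts [hG h', hne h']⟩

end SimpleGraph

section SideHub

variable {P : Finset (ℝ × ℝ)}

open SimpleGraph in
lemma nonCrossing_hubGraph_sup_edge {h : P → P} {y z : P}
    (hhub : ∀ x x' : P, x ≠ h x → x' ≠ h x' → x ≠ x' → ¬ Cross x (h x) x' (h x'))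
    (hbridge : ∀ x : P, x ≠ h x → ¬ Cross y z x (h x)) :
    NonCrossing (hubGraph h ⊔ edge y z) := by
  have hadj : ∀ {a b : P}, (hubGraph h ⊔ edge y z).Adj a b →
      (∃ x, x ≠ h x ∧ s(a, b) = s(x, h x)) ∨ s(a, b) = s(y, z) := by
    rintro a b (hab | hab)
    · rcases hubGraph_adj.mp hab with ⟨hne, rfl | rfl⟩
      exacts [Or.inl ⟨a, hne, rfl⟩, Or.inl ⟨b, hne.symm, Sym2.eq_swap⟩]
    · rcases (edge_adj y z a b).mp hab with ⟨⟨rfl, rfl⟩ | ⟨rfl, rfl⟩, -⟩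
      exacts [Or.inr rfl, Or.inr Sym2.eq_swap]
  have hcoe : ∀ {a b c d : P}, s(a, b) = s(c, d) → s((a : ℝ × ℝ), b) = s((c : ℝ × ℝ), d) :=
    fun e => by simpa using congrArg (Sym2.map Subtype.val) e
  intro a b c d hab hcd hne hcross
  rcases hadj hab with ⟨x, hx, e₁⟩ | e₁ <;> rcases hadj hcd with ⟨x', hx', e₂⟩ | e₂ <;>
    have hcross' := hcross.of_sym2_eq (hcoe e₁) (hcoe e₂)
  · exact hhub x x' hx hx' (fun hxx => hne (by rw [e₁, e₂, hxx])) hcross'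
  · exact hbridge x hx hcross'.symm
  · exact hbridge x' hx' hcross'
  · exact hne (e₁.trans e₂.symm)

noncomputable def sideHub (p q u w : P) (x : P) : P :=
  if 0 < orient p q x ∨ x = p then u else w

variable {p q u w : P}

lemma sideHub_spec (hP : GenPos P) (hpq : p ≠ q) (x : P) :
    (sideHub p q u w x = u ∧ (0 < orient p q x ∨ x = p)) ∨
      (sideHub p q u w x = w ∧ (orient p q x < 0 ∨ x = q)) := by
  unfold sideHub
  split_ifs with hx
  · exact Or.inl ⟨rfl, hx⟩
  · rw [not_or, not_lt] at hx
    refine Or.inr ⟨rfl, hx.1.lt_or_eq.imp_right fun h0 => ?_⟩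
    by_contra hxq
    exact hP.orient_coe_ne_zero hpq (Ne.symm hx.2) (Ne.symm hxq) h0

lemma sideHub_of_pos {x : P} (hx : 0 < orient p q x) : sideHub p q u w x = u :=
  if_pos (Or.inl hx)

lemma sideHub_of_neg {x : P} (hx : orient p q x < 0) : sideHub p q u w x = w :=
  if_neg (by rintro (h | rfl); exacts [h.not_gt hx, hx.ne (orient_left_self _ _)])

end SideHub

section Trees

variable {P : Finset (ℝ × ℝ)} {p q u w : P}

open SimpleGraph

lemma sideHub_idem (hP : GenPos P) (h : ProperCross p q u w) (x : P) :
    sideHub p q u w (sideHub p q u w x) = sideHub p q u w x := by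
  rcases sideHub_spec (u := u) (w := w) hP (ne_of_apply_ne _ h.ne.1) x with ⟨e, -⟩ | ⟨e, -⟩ <;>
    rw [e]
  exacts [sideHub_of_pos h.1, sideHub_of_neg h.2.1]

lemma not_cross_sideHub (hP : GenPos P) (h : ProperCross p q u w) {x x' : P}
    (hx : x ≠ sideHub p q u w x) (hx' : x' ≠ sideHub p q u w x') (hxx' : x ≠ x') :
    ¬ Cross x (sideHub p q u w x) x' (sideHub p q u w x') := by
  have hpq : p ≠ q := ne_of_apply_ne _ h.ne.1
  have hnonneg : ∀ {y : P}, 0 < orient p q y ∨ y = p → 0 ≤ orient p q y := by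
    rintro y (hy | rfl); exacts [hy.le, (orient_left_self _ _).ge]
  have hnonpos : ∀ {y : P}, orient p q y < 0 ∨ y = q → orient p q y ≤ 0 := by
    rintro y (hy | rfl); exacts [hy.le, (orient_right_self _ _).le]
  rcases sideHub_spec hP hpq x with ⟨ex, sx⟩ | ⟨ex, sx⟩ <;>
    rcases sideHub_spec hP hpq x' with ⟨ex', sx'⟩ | ⟨ex', sx'⟩ <;>
    rw [ex] at hx ⊢ <;> rw [ex'] at hx' ⊢
  · exact fun hc => not_cross_of_orient_ne_zero
      (hP.orient_coe_ne_zero (Ne.symm hx) (Ne.symm hx') hxx') hc.swap_left.swap_right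
  · exact not_cross_of_opposite_sides (hnonneg sx) h.1 (hnonpos sx') h.2.1
  · exact fun hc => not_cross_of_opposite_sides (hnonneg sx') h.1 (hnonpos sx) h.2.1 hc.symm
  · exact fun hc => not_cross_of_orient_ne_zero
      (hP.orient_coe_ne_zero (Ne.symm hx) (Ne.symm hx') hxx') hc.swap_left.swap_right

lemma nonCrossing_sideHub_sup_edge_line (hP : GenPos P) (h : ProperCross p q u w) :
    NonCrossing (hubGraph (sideHub p q u w) ⊔ edge p q) := by
  refine nonCrossing_hubGraph_sup_edge (fun x x' => not_cross_sideHub hP h) fun x _ => ?_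
  rcases sideHub_spec (u := u) (w := w) hP (ne_of_apply_ne _ h.ne.1) x with
    ⟨e, hx | hx⟩ | ⟨e, hx | hx⟩ <;> rw [e]
  · exact not_cross_of_orient_pos hx h.1
  · rw [hx]; exact not_cross_of_orient_ne_zero h.1.ne'
  · exact fun hc => not_cross_of_orient_pos (p := q) (q := p) (by linarith [orient_swap_left p q x])
      (by linarith [orient_swap_left p q w, h.2.1]) hc.swap_left
  · rw [hx]; exact fun hc => not_cross_of_orient_ne_zero
      (by linarith [orient_swap_left p q w, h.2.1] : orient q p w ≠ 0) hc.swap_left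

lemma nonCrossing_sideHub_sup_edge_hubs (hP : GenPos P) (h : ProperCross p q u w) :
    NonCrossing (hubGraph (sideHub p q u w) ⊔ edge u w) := by
  have huw : u ≠ w := ne_of_apply_ne _ h.ne.2.2.2.2.2
  refine nonCrossing_hubGraph_sup_edge (fun x x' => not_cross_sideHub hP h) fun x hx => ?_
  rcases sideHub_spec (u := u) (w := w) hP (ne_of_apply_ne _ h.ne.1) x with ⟨e, -⟩ | ⟨e, -⟩ <;>
    rw [e] at hx ⊢
  · have hxw : x ≠ w := by rintro rfl; exact huw (e.symm.trans (sideHub_of_neg h.2.1))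
    exact fun hc => not_cross_of_orient_ne_zero
      (hP.orient_coe_ne_zero huw (Ne.symm hx) (Ne.symm hxw)) hc.swap_right
  · have hxu : x ≠ u := by rintro rfl; exact huw ((sideHub_of_pos h.1).symm.trans e)
    exact fun hc => not_cross_of_orient_ne_zero
      (hP.orient_coe_ne_zero huw.symm (Ne.symm hx) (Ne.symm hxu)) hc.swap_left.swap_right

theorem exists_trees_of_properCross (hP : GenPos P) (h : ProperCross p q u w) :
    ∃ (T S : SimpleGraph P) (a b c d : P),
      T.IsTree ∧ NonCrossing T ∧ S.IsTree ∧ NonCrossing S ∧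
      (symmDiff T.edgeSet S.edgeSet).ncard = 2 ∧
      T.edgeSet \ S.edgeSet = {s(a, b)} ∧
      S.edgeSet \ T.edgeSet = {s(c, d)} ∧
      Cross (a : ℝ × ℝ) b c d := by
  obtain ⟨hpq, hpu, hpw, hqu, -, huw⟩ : p ≠ q ∧ p ≠ u ∧ p ≠ w ∧ q ≠ u ∧ q ≠ w ∧ u ≠ w := by
    simpa only [Ne, Subtype.ext_iff] using h.ne
  have hub_p : sideHub p q u w p = u := if_pos (Or.inr rfl)
  have hub_q : sideHub p q u w q = w := if_neg (by simp [orient_right_self, hpq.symm])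
  have hub_u : sideHub p q u w u = u := sideHub_of_pos h.1
  have hub_w : sideHub p q u w w = w := sideHub_of_neg h.2.1
  have hcover : ∀ x, sideHub p q u w x = u ∨ sideHub p q u w x = w := fun x =>
    (sideHub_spec hP hpq x).imp And.left And.left
  have hpq_edge : s(p, q) ∉ (hubGraph (sideHub p q u w)).edgeSet := by
    rintro hadj
    rcases (hubGraph_adj.mp hadj).2 with e | e
    exacts [hqu (e.trans hub_p), hpw (e.trans hub_q)]
  have huw_edge : s(u, w) ∉ (hubGraph (sideHub p q u w)).edgeSet := by
    rintro hadj
    rcases (hubGraph_adj.mp hadj).2 with e | e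
    exacts [huw (e.trans hub_u).symm, huw (e.trans hub_w)]
  have hne : s(p, q) ≠ s(u, w) := by
    rw [Ne, Sym2.eq_iff]; rintro (⟨e, -⟩ | ⟨e, -⟩); exacts [hpu e, hpw e]
  have hTS := edgeSet_sup_edge_diff_sup_edge hpq huw hpq_edge hne
  have hST := edgeSet_sup_edge_diff_sup_edge huw hpq huw_edge hne.symm
  refine ⟨_, _, p, q, u, w,
    isTree_hubGraph_sup_edge (sideHub_idem hP h) (by rw [hub_p, hub_q]; exact huw)
      (by rwa [hub_p, hub_q]),
    nonCrossing_sideHub_sup_edge_line hP h,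
    isTree_hubGraph_sup_edge (sideHub_idem hP h) (by rw [hub_u, hub_w]; exact huw)
      (by rwa [hub_u, hub_w]),
    nonCrossing_sideHub_sup_edge_hubs hP h, ?_, hTS, hST, h.cross⟩
  rw [Set.symmDiff_def, hTS, hST, Set.singleton_union, Set.ncard_pair hne]

end Trees

theorem stmt_19 (P : Finset (ℝ × ℝ)) (hgen : GenPos P) (hcard : 5 ≤ P.card) :
    ∃ (T S : SimpleGraph P) (a b c d : P),
      T.IsTree ∧ NonCrossing T ∧ S.IsTree ∧ NonCrossing S ∧
      (symmDiff T.edgeSet S.edgeSet).ncard = 2 ∧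
      T.edgeSet \ S.edgeSet = {s(a, b)} ∧
      S.edgeSet \ T.edgeSet = {s(c, d)} ∧
      Cross (a : ℝ × ℝ) b c d := by
  obtain ⟨p, hp, q, hq, u, hu, w, hw, h⟩ := exists_properCross hgen hcard
  exact exists_trees_of_properCross (p := ⟨p, hp⟩) (q := ⟨q, hq⟩) (u := ⟨u, hu⟩) (w := ⟨w, hw⟩)
    hgen h
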